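/- Second-price auctions with γ-approximate machine-learned reserves have price of anarchy at most 2 − γ under undominated bids: fix γ ∈ [0,1], and consider n value-maximizing bidders and m single-slot auctions with values v_ij ≥ 0 and RoS targets τ_i > 0. Suppose each bidder i faces personalized reserve prices r_ij with γ · v_ij / τ_i ≤ r_ij ≤ v_ij / τ_i; bids satisfy b_ij ≥ v_ij / τ_i (undominatedness); the allocation x assigns each auction j fully to bidders with the highest bid (x_ij ∈ [0,1], Σ_i x_ij = 1, x_ij > 0 only if b_ij = max_k b_kj); the payment of bidder i in auction j is p_ij = x_ij · max{ r_ij, max_{k≠i} b_kj }; and every bidder's RoS constraint Σ_j x_ij v_ij ≥ τ_i Σ_j p_ij holds. Then for every feasible allocation y (y_ij ∈ [0,1], Σ_i y_ij ≤ 1 for all j), Σ_i Σ_j y_ij v_ij / τ_i ≤ (2 − γ) · Σ_i Σ_j x_ij v_ij / τ_i. -/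
import Mathlib


open Finset

/-- The highest competing bid against bidder `i`: the maximum of `f k` over `k ≠ i`
(interpreted as `0` when there are no other bidders). -/
noncomputable def compMax (n : ℕ) (f : Fin n → ℝ) (i : Fin n) : ℝ :=
  ⨆ k ∈ Finset.univ.erase i, f k

lemma le_compMax {n : ℕ} (f : Fin n → ℝ) {i k : Fin n} (hk : k ≠ i) :
    f k ≤ compMax n f i := by
  have hmem : k ∈ Finset.univ.erase i := Finset.mem_erase.mpr ⟨hk, Finset.mem_univ k⟩
  have hbdd : BddAbove (Set.range fun t => ⨆ _ : t ∈ Finset.univ.erase i, f t) :=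
    (Set.finite_range _).bddAbove
  calc f k = ⨆ _ : k ∈ Finset.univ.erase i, f k :=
        (ciSup_pos (f := fun _ : k ∈ Finset.univ.erase i => f k) hmem).symm
    _ ≤ compMax n f i := le_ciSup hbdd k

/-- Second-price auctions with γ-approximate machine-learned personalized reserves have
price of anarchy at most `2 - γ` under undominated bids. -/
theorem spa_with_reserves_poa_le_two_sub_gamma
    (γ : ℝ) (hγ0 : 0 ≤ γ) (hγ1 : γ ≤ 1)
    (n m : ℕ) (v : Fin n → Fin m → ℝ) (τ : Fin n → ℝ)
    (r b x p : Fin n → Fin m → ℝ)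
    (hv : ∀ i j, 0 ≤ v i j) (hτ : ∀ i, 0 < τ i)
    (hr : ∀ i j, γ * (v i j / τ i) ≤ r i j ∧ r i j ≤ v i j / τ i)
    (hb : ∀ i j, v i j / τ i ≤ b i j)
    (hx01 : ∀ i j, 0 ≤ x i j ∧ x i j ≤ 1)
    (hxfull : ∀ j, ∑ i, x i j = 1)
    (hwin : ∀ i j, 0 < x i j → ∀ k, b k j ≤ b i j)
    (hpay : ∀ i j, p i j = x i j * max (r i j) (compMax n (fun k => b k j) i))
    (hros : ∀ i, τ i * ∑ j, p i j ≤ ∑ j, x i j * v i j)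
    (y : Fin n → Fin m → ℝ)
    (hy01 : ∀ i j, 0 ≤ y i j ∧ y i j ≤ 1)
    (hyfeas : ∀ j, ∑ i, y i j ≤ 1) :
    ∑ i, ∑ j, y i j * v i j / τ i ≤ (2 - γ) * ∑ i, ∑ j, x i j * v i j / τ i := by
  -- per-auction key bound
  have key : ∀ j, ∑ i, y i j * v i j / τ i ≤
      (1 - γ) * ∑ i, x i j * v i j / τ i + ∑ i, p i j := by
    intro j
    have hne : Nonempty (Fin n) := by
      rcases Nat.eq_zero_or_pos n with h0 | hpos
      · exfalso
        have := hxfull j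
        subst h0
        simp at this
      · exact ⟨⟨0, hpos⟩⟩
    obtain ⟨i₀, -, hi₀⟩ := Finset.exists_max_image Finset.univ (fun i => v i j / τ i)
      ⟨Classical.arbitrary (Fin n), Finset.mem_univ _⟩
    set c := v i₀ j / τ i₀ with hc
    have hc0 : 0 ≤ c := div_nonneg (hv _ _) (hτ _).le
    have hLHS : ∑ i, y i j * v i j / τ i ≤ c := by
      calc ∑ i, y i j * v i j / τ i ≤ ∑ i, y i j * c := by
            refine Finset.sum_le_sum fun i _ => ?_
            rw [mul_div_assoc]
            exact mul_le_mul_of_nonneg_left (hi₀ i (Finset.mem_univ i)) (hy01 i j).1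
        _ = (∑ i, y i j) * c := by rw [Finset.sum_mul]
        _ ≤ 1 * c := mul_le_mul_of_nonneg_right (hyfeas j) hc0
        _ = c := one_mul c
    have hterm : ∀ i, x i j * c ≤ (1 - γ) * (x i j * v i j / τ i) + p i j := by
      intro i
      rcases eq_or_lt_of_le (hx01 i j).1 with hx0 | hxpos
      · rw [← hx0, hpay i j, ← hx0]
        simp
      · have hwinner := hwin i j hxpos
        rcases eq_or_ne i i₀ with rfl | hne'
        · -- winner is the max-value bidder
          have hpge : x i j * (γ * c) ≤ p i j := by
            rw [hpay i j]
            exact mul_le_mul_of_nonneg_left (le_trans (hr i j).1 (le_max_left _ _)) hxpos.le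
          have : (1 - γ) * (x i j * c) + x i j * (γ * c) = x i j * c := by ring
          calc x i j * c = (1 - γ) * (x i j * c) + x i j * (γ * c) := this.symm
            _ ≤ (1 - γ) * (x i j * v i j / τ i) + p i j := by
                refine add_le_add ?_ hpge
                rw [mul_div_assoc]
        · -- winner differs from the max-value bidder
          have hcomp : c ≤ compMax n (fun k => b k j) i :=
            le_trans (hb i₀ j) (le_compMax (fun k => b k j) (Ne.symm hne'))
          have hpge : x i j * c ≤ p i j := by
            rw [hpay i j]
            exact mul_le_mul_of_nonneg_left (le_trans hcomp (le_max_right _ _)) hxpos.le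
          have hnn : 0 ≤ (1 - γ) * (x i j * v i j / τ i) := by
            apply mul_nonneg (by linarith)
            exact div_nonneg (mul_nonneg hxpos.le (hv _ _)) (hτ _).le
          linarith
    have hRHS : c ≤ (1 - γ) * ∑ i, x i j * v i j / τ i + ∑ i, p i j := by
      calc c = (∑ i, x i j) * c := by rw [hxfull j, one_mul]
        _ = ∑ i, x i j * c := by rw [Finset.sum_mul]
        _ ≤ ∑ i, ((1 - γ) * (x i j * v i j / τ i) + p i j) :=
            Finset.sum_le_sum fun i _ => hterm i
        _ = (1 - γ) * ∑ i, x i j * v i j / τ i + ∑ i, p i j := by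
            rw [Finset.sum_add_distrib, Finset.mul_sum]
    linarith
  -- total payment bound from RoS constraints
  have hpay_tot : ∑ i, ∑ j, p i j ≤ ∑ i, ∑ j, x i j * v i j / τ i := by
    refine Finset.sum_le_sum fun i _ => ?_
    rw [← Finset.sum_div, le_div_iff₀ (hτ i)]
    linarith [hros i]
  have hswap : ∑ i, ∑ j, y i j * v i j / τ i = ∑ j, ∑ i, y i j * v i j / τ i :=
    Finset.sum_comm
  have hswapx : ∑ j, ∑ i, x i j * v i j / τ i = ∑ i, ∑ j, x i j * v i j / τ i :=
    Finset.sum_comm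
  have hswapp : ∑ j, ∑ i, p i j = ∑ i, ∑ j, p i j := Finset.sum_comm
  calc ∑ i, ∑ j, y i j * v i j / τ i = ∑ j, ∑ i, y i j * v i j / τ i := hswap
    _ ≤ ∑ j, ((1 - γ) * ∑ i, x i j * v i j / τ i + ∑ i, p i j) :=
        Finset.sum_le_sum fun j _ => key j
    _ = (1 - γ) * ∑ j, ∑ i, x i j * v i j / τ i + ∑ j, ∑ i, p i j := by
        rw [Finset.sum_add_distrib, Finset.mul_sum]
    _ = (1 - γ) * ∑ i, ∑ j, x i j * v i j / τ i + ∑ i, ∑ j, p i j := by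
        rw [hswapx, hswapp]
    _ ≤ (1 - γ) * ∑ i, ∑ j, x i j * v i j / τ i + ∑ i, ∑ j, x i j * v i j / τ i := by
        linarith
    _ = (2 - γ) * ∑ i, ∑ j, x i j * v i j / τ i := by ring
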